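/- arXiv:2304.05486 — 4 statements merged into one kernel-verified Lean document; each statement's English description precedes it below -/
import Mathlib

section
/- Let A : Fin m → Fin m → ℝ be a row-stochastic matrix (all entries nonnegative, each row sums to 1) all of whose entries are at least α > 0, with m·α ≤ 1. Then for any points x_1,…,x_m ∈ ℝ^N, the images x'_i = Σ_j A i j • x_j satisfy, for any i, k: ‖x'_i − x'_k‖ ≤ (1 − m·α)·max_{j,l} ‖x_j − x_l‖. -/
theorem stochastic_matrix_contraction (N m : ℕ) (A : Fin m → Fin m → ℝ) (α : ℝ)
    (hα : 0 < α) (hαA : ∀ i j, α ≤ A i j) (hrow : ∀ i, ∑ j, A i j = 1)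
    (hmα : (m : ℝ) * α ≤ 1)
    (x : Fin m → EuclideanSpace ℝ (Fin N)) (D : ℝ)
    (hD : ∀ j l, ‖x j - x l‖ ≤ D)
    (x' : Fin m → EuclideanSpace ℝ (Fin N))
    (hx' : ∀ i, x' i = ∑ j, A i j • x j) :
    ∀ i k, ‖x' i - x' k‖ ≤ (1 - (m : ℝ) * α) * D := by
  intro i k
  have hD0 : 0 ≤ D := le_trans (norm_nonneg _) (hD i i)
  have h1mα : 0 ≤ 1 - (m : ℝ) * α := by linarith
  set c : Fin m → ℝ := fun j => A i j - A k j with hc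
  set p : Fin m → ℝ := fun j => max (c j) 0 with hp
  set q : Fin m → ℝ := fun j => max (-(c j)) 0 with hq
  have hp0 : ∀ j, 0 ≤ p j := fun j => le_max_right _ _
  have hq0 : ∀ j, 0 ≤ q j := fun j => le_max_right _ _
  have hpq : ∀ j, c j = p j - q j := by
    intro j
    rcases le_total 0 (c j) with h | h
    · simp [hp, hq, max_eq_left h, max_eq_right (neg_nonpos_of_nonneg h)]
    · simp [hp, hq, max_eq_right h, max_eq_left (neg_nonneg_of_nonpos h)]
  have hsumc : ∑ j, c j = 0 := by
    simp [hc, Finset.sum_sub_distrib, hrow i, hrow k]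
  have hT : ∑ j, p j = ∑ j, q j := by
    have h := hsumc
    rw [Finset.sum_congr rfl fun j _ => hpq j, Finset.sum_sub_distrib] at h
    linarith
  set T : ℝ := ∑ j, p j with hTd
  have hT0 : 0 ≤ T := Finset.sum_nonneg fun j _ => hp0 j
  have hTle : T ≤ 1 - (m : ℝ) * α := by
    have hle : ∀ j, p j ≤ A i j - α := by
      intro j
      apply max_le
      · have := hαA k j; simp only [hc]; linarith
      · have := hαA i j; linarith
    calc T ≤ ∑ j : Fin m, (A i j - α) := Finset.sum_le_sum fun j _ => hle j
      _ = 1 - (m : ℝ) * α := by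
          rw [Finset.sum_sub_distrib, hrow i]
          simp [mul_comm]
  have hS : x' i - x' k = ∑ j, c j • x j := by
    rw [hx' i, hx' k, ← Finset.sum_sub_distrib]
    exact Finset.sum_congr rfl fun j _ => by rw [hc, sub_smul]
  rw [hS]
  -- key identity
  have e1 : ∀ j, ∑ l, (p j * q l) • (x j - x l)
      = (p j * T) • x j - ∑ l, (p j * q l) • x l := by
    intro j
    rw [Finset.sum_congr rfl fun l _ => smul_sub (p j * q l) (x j) (x l),
        Finset.sum_sub_distrib, ← Finset.sum_smul, ← Finset.mul_sum, ← hT]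
  have hkey : T • (∑ j, c j • x j) = ∑ j, ∑ l, (p j * q l) • (x j - x l) := by
    symm
    calc ∑ j, ∑ l, (p j * q l) • (x j - x l)
        = ∑ j, ((p j * T) • x j - ∑ l, (p j * q l) • x l) :=
          Finset.sum_congr rfl fun j _ => e1 j
      _ = (∑ j, (p j * T) • x j) - ∑ j, ∑ l, (p j * q l) • x l :=
          Finset.sum_sub_distrib _ _
      _ = (∑ j, (p j * T) • x j) - ∑ l, (T * q l) • x l := by
          rw [Finset.sum_comm]
          congr 1
          refine Finset.sum_congr rfl fun l _ => ?_
          rw [← Finset.sum_smul, ← Finset.sum_mul, ← hTd]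
      _ = T • ∑ j, c j • x j := by
          rw [Finset.smul_sum, ← Finset.sum_sub_distrib]
          refine (Finset.sum_congr rfl fun j _ => ?_).symm
          rw [smul_smul, ← sub_smul]
          congr 1
          rw [hpq j]; ring
  rcases eq_or_lt_of_le hT0 with hT0' | hT0'
  · have hpz : ∀ j ∈ Finset.univ, p j = 0 :=
      (Finset.sum_eq_zero_iff_of_nonneg fun j _ => hp0 j).mp hT0'.symm
    have hqz : ∀ j ∈ Finset.univ, q j = 0 := by
      refine (Finset.sum_eq_zero_iff_of_nonneg fun j _ => hq0 j).mp ?_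
      rw [← hT]; exact hT0'.symm
    have : ∑ j, c j • x j = 0 := by
      refine Finset.sum_eq_zero fun j _ => ?_
      rw [hpq j, hpz j (Finset.mem_univ j), hqz j (Finset.mem_univ j)]
      simp
    rw [this, norm_zero]
    exact mul_nonneg h1mα hD0
  · have hnorm : T * ‖∑ j, c j • x j‖ ≤ T * (T * D) := by
      have h1 : T * ‖∑ j, c j • x j‖ = ‖T • (∑ j, c j • x j)‖ := by
        rw [norm_smul, Real.norm_eq_abs, abs_of_nonneg hT0]
      rw [h1, hkey]
      have inner : ∀ j, ∑ l, p j * q l * D = T * (p j * D) := by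
        intro j
        rw [hT, Finset.sum_mul]
        exact Finset.sum_congr rfl fun l _ => by ring
      calc ‖∑ j, ∑ l, (p j * q l) • (x j - x l)‖
          ≤ ∑ j, ∑ l, ‖(p j * q l) • (x j - x l)‖ :=
            (norm_sum_le _ _).trans (Finset.sum_le_sum fun j _ => norm_sum_le _ _)
        _ ≤ ∑ j, ∑ l, p j * q l * D := by
            refine Finset.sum_le_sum fun j _ => Finset.sum_le_sum fun l _ => ?_
            rw [norm_smul, Real.norm_eq_abs, abs_of_nonneg (mul_nonneg (hp0 j) (hq0 l))]
            exact mul_le_mul_of_nonneg_left (hD j l) (mul_nonneg (hp0 j) (hq0 l))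
        _ = T * (T * D) := by
            rw [Finset.sum_congr rfl fun j _ => inner j, ← Finset.mul_sum,
                ← Finset.sum_mul, ← hTd]
    have := (mul_le_mul_iff_right₀ hT0').mp hnorm
    calc ‖∑ j, c j • x j‖ ≤ T * D := this
      _ ≤ (1 - (m : ℝ) * α) * D := mul_le_mul_of_nonneg_right hTle hD0
end

section
/- Let w ∈ Solo(P)^ω for P ⊆ Π. Then w is Fair for P if and only if w has no suffix in ⋃_{∅≠Q⊊P} Solo(Q)^ω. -/
/-- `Solo P G` : in the instant graph `G`, processes of `P` receive no messages
from outside `P`. -/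
def Solo {n : ℕ} (P : Set (Fin (n + 1))) (G : Fin (n + 1) → Fin (n + 1) → Prop) : Prop :=
  ∀ p q, G p q → q ∈ P → p ∈ P

/-- A graph of `IS_n`: self-loops, Immediacy and Containment. -/
def IsIS {n : ℕ} (G : Fin (n + 1) → Fin (n + 1) → Prop) : Prop :=
  (∀ a, G a a) ∧ (∀ a b c, G a b → G b c → G a c) ∧ (∀ a b, a ≠ b → G a b ∨ G b a)

/-- There is a journey from `p` to `q` in the dynamic graph `w` starting at round `r`. -/
def Journey {n : ℕ} (w : ℕ → Fin (n + 1) → Fin (n + 1) → Prop) (r : ℕ)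
    (p q : Fin (n + 1)) : Prop :=
  ∃ (t : ℕ) (f : Fin (t + 1) → Fin (n + 1)) (g : Fin t → ℕ),
    f 0 = p ∧ f (Fin.last t) = q ∧ StrictMono g ∧ (∀ i, r ≤ g i) ∧
    ∀ i : Fin t, w (g i) (f i.castSucc) (f i.succ)

/-- `w` is Fair for `P`. -/
def Fair {n : ℕ} (P : Set (Fin (n + 1))) (w : ℕ → Fin (n + 1) → Fin (n + 1) → Prop) : Prop :=
  (∀ r, Solo P (w r)) ∧ ∀ p ∈ P, ∀ q ∈ P, ∀ r, Journey w r p q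

/-!
If `w` is not fair for `P`, some `p ∈ P` fails to reach some `q ∈ P` from some round `r`. The
processes of `P` reaching `q` from round `t` form a set antitone in `t`, hence eventually constant,
say equal to `Q` from round `s ≥ r` on. Then `q ∈ Q`, `p ∉ Q`, and `Q` is solo from round `s`: a
message `a → b` at a round `ρ ≥ s` with `b ∈ Q` extends a journey from `b` at `ρ + 1` to one from
`a` at `ρ`. Conversely, a journey into a set that is solo from round `s` on, starting at round `s`,
never leaves it, so no process outside `Q` can reach `Q`.
-/

namespace Journey

variable {n : ℕ} {w : ℕ → Fin (n + 1) → Fin (n + 1) → Prop}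

theorem refl (r : ℕ) (q : Fin (n + 1)) : Journey w r q q :=
  ⟨0, fun _ => q, Fin.elim0, rfl, rfl, fun a => a.elim0, fun a => a.elim0, fun a => a.elim0⟩

theorem of_le {r r' : ℕ} (h : r ≤ r') {p q : Fin (n + 1)} (hj : Journey w r' p q) :
    Journey w r p q := by
  obtain ⟨t, f, g, hf0, hflast, hg, hgr, hw⟩ := hj
  exact ⟨t, f, g, hf0, hflast, hg, fun i => h.trans (hgr i), hw⟩

theorem cons {s : ℕ} {a b q : Fin (n + 1)} (hab : w s a b) (hj : Journey w (s + 1) b q) :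
    Journey w s a q := by
  obtain ⟨t, f, g, hf0, hflast, hg, hgr, hw⟩ := hj
  refine ⟨t + 1, Fin.cons a f, Fin.cons s g, rfl, by simpa [← Fin.succ_last] using hflast,
    ?_, ?_, ?_⟩
  · exact Fin.strictMono_cons.mpr ⟨hgr, hg⟩
  · intro i
    cases i using Fin.cases with
    | zero => exact le_rfl
    | succ i => exact (Nat.le_succ s).trans (hgr i)
  · intro i
    cases i using Fin.cases with
    | zero => simpa [hf0] using hab
    | succ i => simpa [← Fin.succ_castSucc] using hw i

theorem mem_of_solo {s : ℕ} {Q : Set (Fin (n + 1))} (hQ : ∀ r ≥ s, Solo Q (w r))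
    {p q : Fin (n + 1)} (hj : Journey w s p q) (hq : q ∈ Q) : p ∈ Q := by
  obtain ⟨t, f, g, rfl, hflast, -, hgr, hw⟩ := hj
  have hf : ∀ i, f i ∈ Q := by
    intro i
    induction i using Fin.reverseInduction with
    | last => exact hflast ▸ hq
    | cast i ih => exact hQ (g i) (hgr i) _ _ (hw i) ih
  exact hf 0

end Journey

section JourneySources

variable {n : ℕ} (w : ℕ → Fin (n + 1) → Fin (n + 1) → Prop) (P : Set (Fin (n + 1)))
  (q : Fin (n + 1))

def journeySources (r : ℕ) : Set (Fin (n + 1)) :=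
  {x | x ∈ P ∧ Journey w r x q}

theorem antitone_journeySources : Antitone (journeySources w P q) :=
  fun _ _ h _ hx => ⟨hx.1, hx.2.of_le h⟩

theorem exists_journeySources_eq :
    ∃ s, ∀ t ≥ s, journeySources w P q t = journeySources w P q s := by
  obtain ⟨s, hs⟩ := WellFoundedLT.antitone_chain_condition (antitone_journeySources w P q)
  exact ⟨s, fun t ht => (hs t ht).symm⟩

variable {w P q} in
theorem solo_journeySources (hw : ∀ r, Solo P (w r)) {s : ℕ}
    (hs : ∀ t ≥ s, journeySources w P q t = journeySources w P q s) :
    ∀ r ≥ s, Solo (journeySources w P q s) (w r) := by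
  intro r hr a b hab hb
  rw [← hs (r + 1) (by omega)] at hb
  rw [← hs r hr]
  exact ⟨hw r a b hab hb.1, Journey.cons hab hb.2⟩

end JourneySources

theorem fair_iff_no_solo_suffix_general {n : ℕ} (w : ℕ → Fin (n + 1) → Fin (n + 1) → Prop)
    (P : Set (Fin (n + 1)))
    (hw : ∀ r, Solo P (w r)) :
    Fair P w ↔
      ¬ ∃ Q : Set (Fin (n + 1)), Q.Nonempty ∧ Q ⊂ P ∧ ∃ s, ∀ r ≥ s, Solo Q (w r) := by
  constructor
  · rintro ⟨-, hfair⟩ ⟨Q, ⟨q, hq⟩, hQP, s, hQ⟩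
    obtain ⟨p, hp, hpQ⟩ := Set.exists_of_ssubset hQP
    exact hpQ ((hfair p hp q (hQP.1 hq) s).mem_of_solo hQ hq)
  · refine fun h => ⟨hw, fun p hp q hq r => by_contra fun hpq => h ?_⟩
    obtain ⟨s₀, hs₀⟩ := exists_journeySources_eq w P q
    set s := max r s₀
    have hs : ∀ t ≥ s, journeySources w P q t = journeySources w P q s := fun t ht =>
      (hs₀ t (le_of_max_le_right ht)).trans (hs₀ s (le_max_right r s₀)).symm
    have hpQ : p ∉ journeySources w P q s := fun hp' => hpq (hp'.2.of_le (le_max_left r s₀))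
    refine ⟨journeySources w P q s, ⟨q, hq, Journey.refl s q⟩, ?_, s, solo_journeySources hw hs⟩
    exact (Set.ssubset_iff_of_subset fun _ hx => hx.1).mpr ⟨p, hp, hpQ⟩

theorem fair_iff_no_solo_suffix {n : ℕ} (w : ℕ → Fin (n + 1) → Fin (n + 1) → Prop)
    (hIS : ∀ r, IsIS (w r)) (P : Set (Fin (n + 1)))
    (hw : ∀ r, Solo P (w r)) :
    Fair P w ↔
      ¬ ∃ Q : Set (Fin (n + 1)), Q.Nonempty ∧ Q ⊂ P ∧ ∃ s, ∀ r ≥ s, Solo Q (w r) :=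
  fair_iff_no_solo_suffix_general w P hw
end

section
/- Let w be a dynamic graph over instant graphs in IS_n, and suppose w is Fair for P. If w has a suffix in Solo(Q)^ω for some nonempty Q ⊊ P, then considering p ∈ P\Q and a first process q_0 ∈ Q causally influenced by p after the suffix starts leads to a contradiction; hence no such suffix exists. -/
theorem Journey.mem_of_solo_s14 {n : ℕ} {w : ℕ → Fin (n + 1) → Fin (n + 1) → Prop} {r : ℕ}
    {p q : Fin (n + 1)} {Q : Set (Fin (n + 1))} (hsolo : ∀ r' ≥ r, Solo Q (w r'))
    (hjourney : Journey w r p q) (hq : q ∈ Q) : p ∈ Q := by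
  obtain ⟨t, f, g, rfl, rfl, -, hg, hstep⟩ := hjourney
  have hmem : ∀ i, f i ∈ Q :=
    Fin.reverseInduction hq fun i hi => hsolo (g i) (hg i) _ _ (hstep i) hi
  exact hmem 0

theorem fair_no_smaller_solo_suffix_general {n : ℕ} (w : ℕ → Fin (n + 1) → Fin (n + 1) → Prop)
    (P : Set (Fin (n + 1)))
    (hfair : Fair P w) :
    ¬ ∃ Q : Set (Fin (n + 1)), Q.Nonempty ∧ Q ⊂ P ∧ ∃ s, ∀ r ≥ s, Solo Q (w r) := by
  rintro ⟨Q, ⟨q, hq⟩, hQP, s, hsolo⟩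
  obtain ⟨p, hpP, hpQ⟩ := Set.exists_of_ssubset hQP
  exact hpQ ((hfair.2 p hpP q (hQP.subset hq) s).mem_of_solo_s14 hsolo hq)

theorem fair_no_smaller_solo_suffix {n : ℕ} (w : ℕ → Fin (n + 1) → Fin (n + 1) → Prop)
    (hIS : ∀ r, IsIS (w r)) (P : Set (Fin (n + 1)))
    (hfair : Fair P w) :
    ¬ ∃ Q : Set (Fin (n + 1)), Q.Nonempty ∧ Q ⊂ P ∧ ∃ s, ∀ r ≥ s, Solo Q (w r) :=
  fair_no_smaller_solo_suffix_general w P hfair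
end

section
/- Let τ be a maximal simplex of the standard chromatic subdivision Chr(S, χ) of a chromatic n-simplex. Then there exists a Sperner labelling λ of Chr(S, χ) such that a simplex σ ∈ Chr(S, χ) satisfies λ(σ) = {0,…,n} if and only if σ = τ. -/
/-- A vertex of the standard chromatic subdivision: a colour `i` together with a
view `V` containing `i`. -/
abbrev ChrVertex (n : ℕ) := {iv : Fin (n + 1) × Finset (Fin (n + 1)) // iv.1 ∈ iv.2}

/-- A simplex of the standard chromatic subdivision: distinct colours, views
linearly ordered by inclusion, and the immediacy condition. -/
def IsChrSimplex {n : ℕ} (σ : Finset (ChrVertex n)) : Prop :=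
  (∀ x ∈ σ, ∀ y ∈ σ, x.1.1 = y.1.1 → x = y) ∧
  (∀ x ∈ σ, ∀ y ∈ σ, x.1.2 ⊆ y.1.2 ∨ y.1.2 ⊆ x.1.2) ∧
  (∀ x ∈ σ, ∀ y ∈ σ, x.1.1 ∈ y.1.2 → x.1.2 ⊆ y.1.2)

/-!
A maximal simplex `τ` of `Chr` is determined by the view `W c` of its vertex of colour `c`.
Label each vertex of `τ` by the next colour, in a fixed cyclic order, among the colours with the
same `τ`-view, and any other vertex `(i, V)` by a colour of `V` whose `τ`-view contains `V`.
If `σ` is panchromatic with views `V`, the labels on `σ` form a permutation of the colours.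
On a set `A` of colours closed under both `V` and `W`, the permutation preserves the colours whose
`σ`-view is `A` (it preserves `A` and, by immediacy, the rest of `A`); those labels all have
`τ`-view `A`, and since they are closed under the cyclic shift they are exactly the colours with
`τ`-view `A`. Removing them and inducting on `A` gives `V = W`, that is `σ = τ`.
-/

open Finset Function

open Fin.NatCast in
lemma Finset.eq_univ_of_forall_finRotate_mem {k : ℕ} {T : Finset (Fin k)} (hT : T.Nonempty)
    (h : ∀ i ∈ T, finRotate k i ∈ T) : T = univ := by
  obtain ⟨a, ha⟩ := hT
  cases k with
  | zero => exact a.elim0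
  | succ m =>
    have hstep : ∀ j : ℕ, a + (j : Fin (m + 1)) ∈ T := by
      intro j
      induction j with
      | zero => simpa using ha
      | succ j ih => simpa [finRotate_apply, add_assoc] using h _ ih
    refine eq_univ_of_forall fun b => ?_
    simpa using hstep (b - a).val

lemma Finset.mapsTo_of_mapsTo_sdiff {α : Type*} [DecidableEq α] {f : α → α} {A B : Finset α}
    (hf : Set.InjOn f A) (hBA : B ⊆ A) (hA : Set.MapsTo f A A)
    (hAB : Set.MapsTo f (A \ B : Finset α) (A \ B : Finset α)) : Set.MapsTo f B B := by
  intro b hb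
  by_contra hfb
  have hsurj := ((A \ B).finite_toSet.injOn_iff_bijOn_of_mapsTo hAB).1
    (hf.mono (by simp)) |>.surjOn
  obtain ⟨a, ha, hab⟩ := hsurj (show f b ∈ ((A \ B : Finset α) : Set α) by
    simp [hA (hBA hb), hfb])
  have : a = b := hf (mem_sdiff.1 (mem_coe.1 ha)).1 (hBA hb) hab
  simp [this, hb] at ha

section CycleOn

variable {α : Type*} [DecidableEq α]

noncomputable def cycleOn (s : Finset α) : Equiv.Perm α :=
  Equiv.Perm.ofSubtype ((s.equivFin.trans (finRotate _)).trans s.equivFin.symm)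

lemma cycleOn_mem_iff {s : Finset α} {a : α} : cycleOn s a ∈ s ↔ a ∈ s :=
  Equiv.Perm.ofSubtype_apply_mem_iff_mem _ _

lemma eq_of_forall_cycleOn_mem {s M : Finset α} (hMs : M ⊆ s) (hM : M.Nonempty)
    (h : ∀ a ∈ M, cycleOn s a ∈ M) : M = s := by
  set e := s.equivFin
  set T : Finset (Fin s.card) := {i | (e.symm i : α) ∈ M}
  have hT : T = univ := by
    apply eq_univ_of_forall_finRotate_mem
    · obtain ⟨a, ha⟩ := hM
      exact ⟨e ⟨a, hMs ha⟩, by simpa [T] using ha⟩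
    · intro i hi
      have := h _ (mem_filter.1 hi).2
      simpa [T, cycleOn, Equiv.Perm.ofSubtype_apply_of_mem, e] using this
  refine subset_antisymm hMs fun b hb => ?_
  have := hT ▸ mem_univ (e ⟨b, hb⟩)
  simpa [T] using this

end CycleOn

/-- The views of the vertices of a maximal simplex of `Chr`, indexed by colour. -/
structure IsViewSystem {ι : Type*} (W : ι → Finset ι) : Prop where
  mem_self (c : ι) : c ∈ W c
  chain (c d : ι) : W c ⊆ W d ∨ W d ⊆ W c
  subset_of_mem {c d : ι} : c ∈ W d → W c ⊆ W d

namespace IsViewSystem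

variable {ι : Type*} {W : ι → Finset ι}

lemma exists_subset_view (hW : IsViewSystem W) {A : Finset ι} (hA : A.Nonempty) :
    ∃ c ∈ A, A ⊆ W c := by
  obtain ⟨c, hc, hmax⟩ := A.exists_max_image (fun c => #(W c)) hA
  refine ⟨c, hc, fun d hd => ?_⟩
  have hdc : W d ⊆ W c :=
    (hW.chain d c).elim id fun h => (eq_of_subset_of_card_le h (hmax d hd)).ge
  exact hdc (hW.mem_self d)

variable [Fintype ι] [DecidableEq ι]

lemma fiber_subset (hW : IsViewSystem W) (A : Finset ι) : ({c | W c = A} : Finset ι) ⊆ A :=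
  fun c hc => (mem_filter.1 hc).2 ▸ hW.mem_self c

lemma fiber_nonempty (hW : IsViewSystem W) {A : Finset ι} (hA : A.Nonempty)
    (hWA : ∀ c ∈ A, W c ⊆ A) : ({c | W c = A} : Finset ι).Nonempty := by
  obtain ⟨c, hc, hAc⟩ := hW.exists_subset_view hA
  exact ⟨c, by simpa using subset_antisymm (hWA c hc) hAc⟩

lemma sdiff_fiber_closed (hW : IsViewSystem W) {A : Finset ι} (hA : ∀ c ∈ A, W c ⊆ A) :
    ∀ c ∈ A \ ({c | W c = A} : Finset ι), W c ⊆ A \ ({c | W c = A} : Finset ι) := by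
  intro c hc d hd
  simp only [mem_sdiff, mem_filter, mem_univ, true_and] at hc ⊢
  refine ⟨hA c hc.1 hd, fun hdA => hc.2 (subset_antisymm (hA c hc.1) ?_)⟩
  exact hdA ▸ hW.subset_of_mem hd

end IsViewSystem

section Labelling

variable {ι : Type*} [Fintype ι] [DecidableEq ι]

noncomputable def blockShift (W : ι → Finset ι) (i : ι) : ι :=
  cycleOn {d | W d = W i} i

lemma view_blockShift (W : ι → Finset ι) (i : ι) : W (blockShift W i) = W i := by
  simpa [blockShift] using (cycleOn_mem_iff (s := {d | W d = W i}) (a := i)).2 (by simp)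

lemma blockShift_surjective (W : ι → Finset ι) : Surjective (blockShift W) := by
  intro d
  set s : Finset ι := {e | W e = W d}
  refine ⟨(cycleOn s).symm d, ?_⟩
  have hc : W ((cycleOn s).symm d) = W d := by
    simpa [s] using (cycleOn_mem_iff (s := s) (a := (cycleOn s).symm d)).1 (by simp [s])
  simp [blockShift, hc, s]

/-- The fallback `i` is never reached when `i ∈ V` (see `IsViewSystem.chrLabel_mem`). -/
noncomputable def chrLabel (W : ι → Finset ι) (i : ι) (V : Finset ι) : ι :=
  if V = W i then blockShift W i else if h : ∃ c ∈ V, V ⊆ W c then h.choose else i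

end Labelling

namespace IsViewSystem

variable {ι : Type*} [Fintype ι] [DecidableEq ι] {W V : ι → Finset ι}

lemma chrLabel_mem (hW : IsViewSystem W) {i : ι} {U : Finset ι} (hi : i ∈ U) :
    chrLabel W i U ∈ U := by
  unfold chrLabel
  split_ifs with hU hdom
  · exact hU ▸ view_blockShift W i ▸ hW.mem_self _
  · exact hdom.choose_spec.1
  · exact hi

lemma subset_view_chrLabel (hW : IsViewSystem W) {i : ι} {U : Finset ι} (hi : i ∈ U)
    (hU : U ≠ W i) : U ⊆ W (chrLabel W i U) := by
  have hdom := hW.exists_subset_view ⟨i, hi⟩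
  rw [chrLabel, if_neg hU, dif_pos hdom]
  exact hdom.choose_spec.2

lemma fiber_eq_of_injective_chrLabel (hW : IsViewSystem W) (hV : IsViewSystem V)
    (hL : Injective fun c => chrLabel W c (V c)) {A : Finset ι} (hA : A.Nonempty)
    (hVA : ∀ c ∈ A, V c ⊆ A) (hWA : ∀ c ∈ A, W c ⊆ A) :
    ({c | V c = A} : Finset ι) = ({c | W c = A} : Finset ι) := by
  set L := fun c => chrLabel W c (V c)
  set M : Finset ι := {c | V c = A}
  set N : Finset ι := {c | W c = A}
  have hLA : Set.MapsTo L A A := fun c hc => hVA c hc (hW.chrLabel_mem (hV.mem_self c))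
  have hLM : Set.MapsTo L M M := mapsTo_of_mapsTo_sdiff hL.injOn (hV.fiber_subset A) hLA
    fun c hc => hV.sdiff_fiber_closed hVA c hc (hW.chrLabel_mem (hV.mem_self c))
  have hLM' : Set.SurjOn L M M :=
    ((M.finite_toSet.injOn_iff_bijOn_of_mapsTo hLM).1 hL.injOn).surjOn
  have hMN : M ⊆ N := by
    intro m hm
    obtain ⟨c, hc, rfl⟩ := hLM' hm
    have hVc : V c = A := by simpa [M] using hc
    by_cases hcW : V c = W c
    · simp [N, L, chrLabel, hcW, view_blockShift, ← hVc]
    · have h1 := hVA c (hV.fiber_subset A hc) (hW.chrLabel_mem (hV.mem_self c))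
      have h2 := hW.subset_view_chrLabel (hV.mem_self c) hcW
      simpa [N, L] using subset_antisymm (hWA _ h1) (hVc ▸ h2)
  refine eq_of_forall_cycleOn_mem hMN (hV.fiber_nonempty hA hVA) fun a ha => ?_
  have hVa : V a = A := by simpa [M] using ha
  have hWa : W a = A := by simpa [N] using hMN ha
  have : L a = cycleOn N a := by simp [L, chrLabel, hVa, hWa, blockShift, N]
  exact this ▸ hLM ha

theorem eq_of_injective_chrLabel (hW : IsViewSystem W) (hV : IsViewSystem V)
    (hL : Injective fun c => chrLabel W c (V c)) : V = W := by
  suffices key : ∀ A : Finset ι, (∀ c ∈ A, V c ⊆ A) → (∀ c ∈ A, W c ⊆ A) →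
      ∀ c ∈ A, V c = W c from
    funext fun c => key univ (by simp) (by simp) c (mem_univ c)
  intro A
  induction A using Finset.strongInduction with
  | H A ih =>
  intro hVA hWA c hc
  have hA : A.Nonempty := ⟨c, hc⟩
  have hMN := hW.fiber_eq_of_injective_chrLabel hV hL hA hVA hWA
  by_cases hcV : V c = A
  · have hcW : c ∈ ({d | W d = A} : Finset ι) := hMN ▸ by simpa using hcV
    rw [hcV, (by simpa using hcW : W c = A)]
  · refine ih _ (sdiff_ssubset (hV.fiber_subset A) (hV.fiber_nonempty hA hVA))
      (hV.sdiff_fiber_closed hVA) (hMN ▸ hW.sdiff_fiber_closed hWA) c ?_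
    simp [hc, hcV]

end IsViewSystem

def HasViews {n : ℕ} (σ : Finset (ChrVertex n)) (V : Fin (n + 1) → Finset (Fin (n + 1))) :
    Prop :=
  ∀ x : ChrVertex n, x ∈ σ ↔ x.1.2 = V x.1.1

namespace IsChrSimplex

variable {n : ℕ} {σ : Finset (ChrVertex n)}

lemma card_le (hσ : IsChrSimplex σ) : #σ ≤ n + 1 := by
  simpa using card_le_card_of_injOn (fun x : ChrVertex n => x.1.1) (fun x _ => mem_univ _)
    fun x hx y hy h => hσ.1 x hx y hy h

lemma exists_hasViews (hσ : IsChrSimplex σ) (hcard : #σ = n + 1) :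
    ∃ V, IsViewSystem V ∧ HasViews σ V := by
  have hcol : σ.image (fun x : ChrVertex n => x.1.1) = univ := by
    refine eq_univ_of_card _ ?_
    rw [card_image_of_injOn fun x hx y hy h => hσ.1 x hx y hy h, hcard, Fintype.card_fin]
  have hex : ∀ c, ∃ x ∈ σ, x.1.1 = c := fun c => mem_image.1 (hcol ▸ mem_univ c)
  choose u hu hcu using hex
  have hmem : ∀ x ∈ σ, x = u x.1.1 := fun x hx => hσ.1 x hx _ (hu _) (hcu _).symm
  have hV : IsViewSystem fun c => (u c).1.2 :=
    ⟨fun c => by simpa [hcu c] using (u c).2, fun c d => hσ.2.1 _ (hu c) _ (hu d),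
      fun {c d} h => hσ.2.2 _ (hu c) _ (hu d) (by rwa [hcu])⟩
  refine ⟨_, hV, fun x => ⟨fun hx => congrArg (fun y : ChrVertex n => y.1.2) (hmem x hx),
    fun hx => ?_⟩⟩
  have : x = u x.1.1 := Subtype.ext (Prod.ext (hcu _).symm hx)
  exact this ▸ hu _

end IsChrSimplex

namespace HasViews

variable {n : ℕ} {σ τ : Finset (ChrVertex n)} {V W : Fin (n + 1) → Finset (Fin (n + 1))}

lemma image_eq_univ_iff (hσ : HasViews σ V) (hV : ∀ c, c ∈ V c)
    (f : Fin (n + 1) → Finset (Fin (n + 1)) → Fin (n + 1)) :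
    σ.image (fun x => f x.1.1 x.1.2) = univ ↔ Surjective fun c => f c (V c) := by
  simp only [eq_univ_iff_forall, mem_image, Surjective]
  refine forall_congr' fun d => ⟨?_, ?_⟩
  · rintro ⟨x, hx, rfl⟩
    exact ⟨x.1.1, by rw [← (hσ x).1 hx]⟩
  · rintro ⟨c, rfl⟩
    exact ⟨⟨(c, V c), hV c⟩, (hσ _).2 rfl, rfl⟩

lemma eq_iff (hσ : HasViews σ V) (hV : ∀ c, c ∈ V c) (hτ : HasViews τ W) :
    σ = τ ↔ V = W := by
  refine ⟨fun h => funext fun c => ?_, fun h => ?_⟩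
  · have := (hσ ⟨(c, V c), hV c⟩).2 rfl
    exact (hτ _).1 (h ▸ this)
  · ext x
    rw [hσ, hτ, h]

end HasViews

/-- Existence of a Sperner `τ`-panlabelling of the standard chromatic
subdivision: a Sperner labelling whose unique panchromatic simplex is `τ`. -/
theorem exists_sperner_panlabelling {n : ℕ} (τ : Finset (ChrVertex n))
    (hτ : IsChrSimplex τ) (hmax : τ.card = n + 1) :
    ∃ lab : ChrVertex n → Fin (n + 1),
      (∀ x : ChrVertex n, lab x ∈ x.1.2) ∧
      ∀ σ : Finset (ChrVertex n), IsChrSimplex σ →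
        (σ.image lab = Finset.univ ↔ σ = τ) := by
  obtain ⟨W, hW, hτW⟩ := hτ.exists_hasViews hmax
  refine ⟨fun x => chrLabel W x.1.1 x.1.2, fun x => hW.chrLabel_mem x.2,
    fun σ hσ => ⟨fun hpan => ?_, ?_⟩⟩
  · have hcard : #σ = n + 1 := le_antisymm hσ.card_le <| by
      simpa [hpan] using card_image_le (s := σ) (f := fun x => chrLabel W x.1.1 x.1.2)
    obtain ⟨V, hV, hσV⟩ := hσ.exists_hasViews hcard
    rw [hσV.image_eq_univ_iff hV.mem_self] at hpan
    rw [hσV.eq_iff hV.mem_self hτW]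
    exact hW.eq_of_injective_chrLabel hV (Finite.injective_iff_surjective.2 hpan)
  · rintro rfl
    rw [hτW.image_eq_univ_iff hW.mem_self]
    simpa [chrLabel] using blockShift_surjective W
end
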